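/- arXiv:2303.09250 — 5 statements merged into one kernel-verified Lean document; each statement's English description precedes it below -/
import Mathlib

section
/- Let S = [[s₁, −s₂*],[s₂, s₁*]] ∈ Σ. Then the similarity orbit Sim(S) = {X⁻¹SX : X ∈ Σ, X ≠ 0} (every nonzero X ∈ Σ being invertible) equals the set of all matrices T = [[t₁, −t₂*],[t₂, t₁*]] ∈ Σ such that Re(s₁) = Re(t₁) and (Im s₁)² + |s₂|² = (Im t₁)² + |t₂|². -/
/-!
Σ is the algebra of real quaternions, so conjugation by a nonzero X ∈ Σ stays in Σ and preserves
trace `2 Re s₁` and determinant `|s₁|² + |s₂|²`, which are exactly the two invariants in the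
statement. Conversely, two 2×2 matrices S, T with equal trace and determinant are intertwined by
`X = S + T - tr S • 1` (Cayley–Hamilton). For S, T ∈ Σ this X lies in Σ, and it vanishes only when
`T = tr S • 1 - S`; then any nonzero `X = sigmaMat 0 c` with `c` orthogonal to `s₂` anticommutes
with the pure part of S and does the job.
-/

open Matrix Complex

noncomputable def sigma2 : Matrix (Fin 2) (Fin 2) ℂ := !![0, -Complex.I; Complex.I, 0]

/-- Membership in Σ: S* = σ₂ S σ₂ entrywise-conjugate symmetry. -/
def memSigma (S : Matrix (Fin 2) (Fin 2) ℂ) : Prop :=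
  S.map (starRingEnd ℂ) = sigma2 * S * sigma2

open ComplexConjugate

theorem Matrix.map_starRingEnd_inv {n R : Type*} [Fintype n] [DecidableEq n] [CommRing R]
    [StarRing R] (A : Matrix n n R) : A⁻¹.map (starRingEnd R) = (A.map (starRingEnd R))⁻¹ := by
  change (A⁻¹ᴴ)ᵀ = (Aᴴᵀ)⁻¹
  rw [conjTranspose_nonsing_inv, transpose_nonsing_inv]

theorem Matrix.mul_self_eq_trace_smul_sub_det_smul_one {R : Type*} [CommRing R] [Nontrivial R]
    (M : Matrix (Fin 2) (Fin 2) R) : M * M = M.trace • M - M.det • 1 := by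
  have h := M.aeval_self_charpoly
  simp only [charpoly_fin_two, map_add, map_sub, Polynomial.aeval_X, map_mul,
    Polynomial.aeval_C, Algebra.algebraMap_eq_smul_one, smul_mul_assoc, one_mul, sq] at h
  rw [← sub_eq_zero, ← h]
  abel

theorem Matrix.mul_add_sub_trace_smul_one {R : Type*} [CommRing R] [Nontrivial R]
    (A B : Matrix (Fin 2) (Fin 2) R) (htr : A.trace = B.trace) (hdet : A.det = B.det) :
    A * (A + B - A.trace • 1) = (A + B - A.trace • 1) * B := by
  simp only [mul_sub, sub_mul, mul_add, add_mul, mul_smul_comm, smul_mul_assoc, mul_one, one_mul,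
    mul_self_eq_trace_smul_sub_det_smul_one A, mul_self_eq_trace_smul_sub_det_smul_one B, htr, hdet]
  abel

theorem sigma2_mul_self : sigma2 * sigma2 = 1 := by
  ext i j; fin_cases i <;> fin_cases j <;> simp [sigma2]

theorem sigma2_mul_mul_sigma2 (X : Matrix (Fin 2) (Fin 2) ℂ) :
    sigma2 * X * sigma2 = !![X 1 1, -X 1 0; -X 0 1, X 0 0] := by
  ext i j
  fin_cases i <;> fin_cases j <;>
    simp [sigma2, Matrix.mul_apply, Fin.sum_univ_two, vecMul, dotProduct] <;> ring_nf <;> simp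

def sigmaMat (a b : ℂ) : Matrix (Fin 2) (Fin 2) ℂ :=
  !![a, -conj b; b, conj a]

theorem memSigma_sigmaMat (a b : ℂ) : memSigma (sigmaMat a b) := by
  rw [memSigma, sigma2_mul_mul_sigma2]
  ext i j; fin_cases i <;> fin_cases j <;> simp [sigmaMat]

theorem memSigma_iff_exists_eq_sigmaMat {X : Matrix (Fin 2) (Fin 2) ℂ} :
    memSigma X ↔ ∃ a b, X = sigmaMat a b := by
  refine ⟨fun h ↦ ⟨X 0 0, X 1 0, ?_⟩, fun ⟨a, b, hX⟩ ↦ hX ▸ memSigma_sigmaMat a b⟩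
  rw [memSigma, sigma2_mul_mul_sigma2] at h
  have h00 : conj (X 0 0) = X 1 1 := by simpa using congrFun₂ h 0 0
  have h10 : conj (X 1 0) = -X 0 1 := by simpa using congrFun₂ h 1 0
  ext i j; fin_cases i <;> fin_cases j <;> simp [sigmaMat, h00, h10]

theorem memSigma.mul {X Y : Matrix (Fin 2) (Fin 2) ℂ} (hX : memSigma X) (hY : memSigma Y) :
    memSigma (X * Y) := by
  rw [memSigma, Matrix.map_mul, hX, hY]
  calc sigma2 * X * sigma2 * (sigma2 * Y * sigma2)
      = sigma2 * X * (sigma2 * sigma2) * Y * sigma2 := by simp only [Matrix.mul_assoc]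
    _ = sigma2 * (X * Y) * sigma2 := by
      rw [sigma2_mul_self]; simp only [Matrix.mul_one, Matrix.mul_assoc]

theorem memSigma.inv {X : Matrix (Fin 2) (Fin 2) ℂ} (hX : memSigma X) : memSigma X⁻¹ := by
  have hσ : sigma2⁻¹ = sigma2 := inv_eq_left_inv sigma2_mul_self
  rw [memSigma, map_starRingEnd_inv, hX, Matrix.mul_inv_rev, Matrix.mul_inv_rev, hσ,
    Matrix.mul_assoc]

theorem trace_sigmaMat (a b : ℂ) : (sigmaMat a b).trace = (2 * a.re : ℝ) := by
  rw [sigmaMat, trace_fin_two_of, add_conj]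

theorem det_sigmaMat (a b : ℂ) : (sigmaMat a b).det = (normSq a + normSq b : ℝ) := by
  rw [sigmaMat, det_fin_two_of]; push_cast [← mul_conj]; ring

theorem sigmaMat_eq_zero_iff {a b : ℂ} : sigmaMat a b = 0 ↔ a = 0 ∧ b = 0 := by
  refine ⟨fun h ↦ ⟨by simpa [sigmaMat] using congrFun₂ h 0 0,
    by simpa [sigmaMat] using congrFun₂ h 1 0⟩, ?_⟩
  rintro ⟨rfl, rfl⟩
  ext i j; fin_cases i <;> fin_cases j <;> simp [sigmaMat]

theorem memSigma.isUnit {X : Matrix (Fin 2) (Fin 2) ℂ} (hX : memSigma X) (hX0 : X ≠ 0) :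
    IsUnit X := by
  obtain ⟨a, b, rfl⟩ := memSigma_iff_exists_eq_sigmaMat.mp hX
  rw [isUnit_iff_isUnit_det, det_sigmaMat, isUnit_iff_ne_zero, ofReal_ne_zero]
  rw [Ne, sigmaMat_eq_zero_iff, ← normSq_eq_zero, ← normSq_eq_zero] at hX0
  have := normSq_nonneg a
  have := normSq_nonneg b
  intro h
  exact hX0 ⟨by linarith, by linarith⟩

theorem sigmaMat_trace_det_eq_iff (s₁ s₂ t₁ t₂ : ℂ) :
    (sigmaMat s₁ s₂).trace = (sigmaMat t₁ t₂).trace ∧ (sigmaMat s₁ s₂).det = (sigmaMat t₁ t₂).det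
      ↔ s₁.re = t₁.re ∧ s₁.im ^ 2 + ‖s₂‖ ^ 2 = t₁.im ^ 2 + ‖t₂‖ ^ 2 := by
  simp only [trace_sigmaMat, det_sigmaMat, ofReal_inj, normSq_apply, ← normSq_eq_norm_sq]
  constructor
  · rintro ⟨hre, hdet⟩
    have hre : s₁.re = t₁.re := by linarith
    refine ⟨hre, ?_⟩
    rw [hre] at hdet
    linear_combination hdet
  · rintro ⟨hre, him⟩
    refine ⟨by rw [hre], ?_⟩
    rw [hre]
    linear_combination him

theorem exists_ne_zero_re_conj_mul_eq_zero (z : ℂ) : ∃ c ≠ 0, (conj c * z).re = 0 := by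
  by_cases hz : z = 0
  · exact ⟨1, one_ne_zero, by simp [hz]⟩
  · refine ⟨I * z, mul_ne_zero I_ne_zero hz, ?_⟩
    simp [mul_assoc, conj_mul', sq]

theorem sigmaMat_mul_sigmaMat_zero {s₁ s₂ c : ℂ} (hc : (conj c * s₂).re = 0) :
    sigmaMat s₁ s₂ * sigmaMat 0 c = sigmaMat 0 c * sigmaMat (conj s₁) (-s₂) := by
  have hc' : conj c * s₂ + c * conj s₂ = 0 := by
    simpa [hc] using add_conj (conj c * s₂)
  ext i j; fin_cases i <;> fin_cases j <;> simp [sigmaMat, Matrix.mul_apply, Fin.sum_univ_two]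
  · linear_combination -hc'
  · ring
  · ring
  · linear_combination -hc'

theorem sigmaMat_add_sub_trace_smul_one (s₁ s₂ t₁ t₂ : ℂ) :
    sigmaMat s₁ s₂ + sigmaMat t₁ t₂ - (sigmaMat s₁ s₂).trace • 1 =
      sigmaMat (t₁ - conj s₁) (s₂ + t₂) := by
  rw [sigmaMat, sigmaMat, sigmaMat, trace_fin_two_of]
  ext i j; fin_cases i <;> fin_cases j <;> simp <;> ring

theorem exists_memSigma_ne_zero_intertwining {s₁ s₂ t₁ t₂ : ℂ}
    (htr : (sigmaMat s₁ s₂).trace = (sigmaMat t₁ t₂).trace)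
    (hdet : (sigmaMat s₁ s₂).det = (sigmaMat t₁ t₂).det) :
    ∃ X, memSigma X ∧ X ≠ 0 ∧ sigmaMat s₁ s₂ * X = X * sigmaMat t₁ t₂ := by
  by_cases hX₀ : sigmaMat (t₁ - conj s₁) (s₂ + t₂) = 0
  · obtain ⟨ht₁, ht₂⟩ := sigmaMat_eq_zero_iff.mp hX₀
    obtain rfl : t₁ = conj s₁ := sub_eq_zero.mp ht₁
    obtain rfl : t₂ = -s₂ := (neg_eq_of_add_eq_zero_right ht₂).symm
    obtain ⟨c, hc0, hc⟩ := exists_ne_zero_re_conj_mul_eq_zero s₂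
    exact ⟨sigmaMat 0 c, memSigma_sigmaMat 0 c, by simp [sigmaMat_eq_zero_iff, hc0],
      sigmaMat_mul_sigmaMat_zero hc⟩
  · refine ⟨_, memSigma_sigmaMat _ _, hX₀, ?_⟩
    rw [← sigmaMat_add_sub_trace_smul_one]
    exact mul_add_sub_trace_smul_one _ _ htr hdet

/-- the similarity orbit of S = [[s₁, −s₂*],[s₂, s₁*]] ∈ Σ under
conjugation by nonzero elements of Σ equals the set of T = [[t₁, −t₂*],[t₂, t₁*]]
with Re s₁ = Re t₁ and (Im s₁)² + |s₂|² = (Im t₁)² + |t₂|². -/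
theorem similarity_orbit_in_Sigma (s₁ s₂ : ℂ)
    (S : Matrix (Fin 2) (Fin 2) ℂ)
    (hS : S = !![s₁, -(starRingEnd ℂ) s₂; s₂, (starRingEnd ℂ) s₁]) :
    {T : Matrix (Fin 2) (Fin 2) ℂ |
        ∃ X : Matrix (Fin 2) (Fin 2) ℂ, memSigma X ∧ X ≠ 0 ∧ T = X⁻¹ * S * X} =
    {T : Matrix (Fin 2) (Fin 2) ℂ |
        ∃ t₁ t₂ : ℂ, T = !![t₁, -(starRingEnd ℂ) t₂; t₂, (starRingEnd ℂ) t₁] ∧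
          s₁.re = t₁.re ∧
          s₁.im ^ 2 + ‖s₂‖ ^ 2 = t₁.im ^ 2 + ‖t₂‖ ^ 2} := by
  change S = sigmaMat s₁ s₂ at hS
  ext T
  constructor
  · rintro ⟨X, hX, hX0, rfl⟩
    obtain ⟨t₁, t₂, hT⟩ := memSigma_iff_exists_eq_sigmaMat.mp
      ((hX.inv.mul (hS ▸ memSigma_sigmaMat s₁ s₂)).mul hX)
    refine ⟨t₁, t₂, hT, (sigmaMat_trace_det_eq_iff s₁ s₂ t₁ t₂).mp ?_⟩
    rw [← hT, ← hS]
    exact ⟨(trace_conj' (hX.isUnit hX0) S).symm, (det_conj' (hX.isUnit hX0) S).symm⟩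
  · rintro ⟨t₁, t₂, rfl, hinv⟩
    obtain ⟨htr, hdet⟩ := (sigmaMat_trace_det_eq_iff s₁ s₂ t₁ t₂).mpr hinv
    obtain ⟨X, hX, hX0, hSX⟩ := exists_memSigma_ne_zero_intertwining htr hdet
    refine ⟨X, hX, hX0, ?_⟩
    rw [hS, Matrix.mul_assoc, hSX, nonsing_inv_mul_cancel_left _ _
      ((isUnit_iff_isUnit_det X).mp (hX.isUnit hX0))]
    rfl
end

section
/- Let A be an n×n complex matrix all of whose eigenvalues have positive real part, and let M be any n×n complex matrix. Then the function s ↦ e^{−sA}·M·e^{−sA} is integrable on [0, ∞), the matrix P = ∫₀^∞ e^{−sA}·M·e^{−sA} ds satisfies the Sylvester equation AP + PA = M, and P is the unique n×n complex matrix with this property. -/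
/-!
Write `E s = exp (-s • A)`. Since `exp (-A)` has spectrum `exp (-σ(A))` inside the open unit disc,
Gelfand's formula gives `‖exp (-A) ^ k‖ = O(e^{-εk})`, and the semigroup law extends this to
`‖E s‖ = O(e^{-εs})`. Hence `s ↦ E s * M * E s` is integrable on `(0, ∞)`. If `A P + P A = M`,
then `d/ds (E s * P * E s) = -E s * M * E s`, so the fundamental theorem of calculus gives
`∫₀^∞ E s * M * E s ds = P`. Taking `M = 0` shows that `P ↦ A P + P A` is injective, hence
bijective in finite dimension, so a solution exists and equals the integral.
-/

open MeasureTheory NormedSpace Filter Topology Asymptotics Set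

section ComplexBanachAlgebra

variable {A : Type*} [NormedRing A] [NormedAlgebra ℂ A] [CompleteSpace A]

theorem isBigO_pow_of_spectralRadius_lt {b : A} {r : ℝ}
    (h : spectralRadius ℂ b < ENNReal.ofReal r) :
    (fun k : ℕ => b ^ k) =O[atTop] fun k => r ^ k := by
  have hr : 0 < r := ENNReal.ofReal_pos.mp (h.trans_le' bot_le)
  refine IsBigO.of_bound 1 ?_
  filter_upwards [(spectrum.pow_norm_pow_one_div_tendsto_nhds_spectralRadius b).eventually_lt_const
    h, eventually_gt_atTop 0] with k hk hk0
  rw [ENNReal.ofReal_lt_ofReal_iff hr, one_div, Real.rpow_inv_lt_iff_of_pos (norm_nonneg _) hr.le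
    (by positivity), Real.rpow_natCast] at hk
  rw [one_mul, Real.norm_of_nonneg (by positivity)]
  exact hk.le

theorem exists_isBigO_pow_of_spectralRadius_lt_one {b : A} (h : spectralRadius ℂ b < 1) :
    ∃ ε > 0, (fun k : ℕ => b ^ k) =O[atTop] fun k => Real.exp (-ε * k) := by
  obtain ⟨r, -, hbr, hr1⟩ := ENNReal.lt_iff_exists_real_btwn.mp h
  have hr : 0 < r := ENNReal.ofReal_pos.mp (hbr.trans_le' bot_le)
  refine ⟨-Real.log r, neg_pos.mpr (Real.log_neg hr ?_), ?_⟩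
  · simpa using hr1
  · simpa [← Real.rpow_natCast, Real.rpow_def_of_pos hr] using isBigO_pow_of_spectralRadius_lt hbr

end ComplexBanachAlgebra

section RealBanachAlgebra

variable {𝔸 : Type*} [NormedRing 𝔸] [NormedAlgebra ℝ 𝔸] {a : 𝔸} {ε : ℝ}

theorem isBigO_exp_neg_smul_mul_mul_exp_neg_smul (hε : 0 < ε)
    (hdecay : (fun s : ℝ => exp (-(s • a))) =O[atTop] fun s => Real.exp (-ε * s)) (m : 𝔸) :
    (fun s : ℝ => exp (-(s • a)) * m * exp (-(s • a))) =O[atTop]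
      fun s => Real.exp (-ε * s) := by
  have hbdd : (fun s : ℝ => exp (-(s • a))) =O[atTop] fun _ => (1 : ℝ) :=
    hdecay.trans ((Real.tendsto_exp_comp_nhds_zero.mpr
      (tendsto_id.const_mul_atTop_of_neg (neg_lt_zero.mpr hε))).isBigO_one (F := ℝ))
  simpa using (hdecay.mul (isBigO_const_const m (one_ne_zero' ℝ) atTop)).mul hbdd

variable [CompleteSpace 𝔸]

theorem isBigO_exp_smul_of_isBigO_pow {c : ℝ}
    (h : (fun k : ℕ => exp a ^ k) =O[atTop] fun k => Real.exp (c * k)) :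
    (fun s : ℝ => exp (s • a)) =O[atTop] fun s => Real.exp (c * s) := by
  let +nondep : NormedAlgebra ℚ 𝔸 := .restrictScalars ℚ ℝ 𝔸
  obtain ⟨K, hK⟩ := (isCompact_Icc (a := (0 : ℝ)) (b := 1)).exists_bound_of_continuousOn
    (differentiable_exp_smul_const ℝ a).continuous.continuousOn
  have hfloor : (fun s : ℝ => exp (s • a)) =O[atTop] fun s => exp a ^ ⌊s⌋₊ := by
    refine IsBigO.of_bound K ?_
    filter_upwards [eventually_ge_atTop 0] with s hs
    have hsplit : s • a = (s - ⌊s⌋₊) • a + ⌊s⌋₊ • a := by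
      rw [← Nat.cast_smul_eq_nsmul ℝ, ← add_smul, sub_add_cancel]
    rw [hsplit, exp_add_of_commute ((Commute.refl a).smul_left _ |>.smul_right _), exp_nsmul]
    refine (norm_mul_le _ _).trans (mul_le_mul_of_nonneg_right (hK _ ⟨?_, ?_⟩) (norm_nonneg _))
    · linarith [Nat.floor_le hs]
    · linarith [Nat.lt_floor_add_one s]
  have hexp : (fun s : ℝ => Real.exp (c * ⌊s⌋₊)) =O[atTop] fun s => Real.exp (c * s) := by
    refine IsBigO.of_bound (Real.exp |c|) ?_
    filter_upwards [eventually_ge_atTop 0] with s hs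
    rw [Real.norm_of_nonneg (Real.exp_nonneg _), Real.norm_of_nonneg (Real.exp_nonneg _),
      ← Real.exp_add, Real.exp_le_exp]
    have : |c * ⌊s⌋₊ - c * s| ≤ |c| := by
      rw [← mul_sub, abs_mul]
      refine mul_le_of_le_one_right (abs_nonneg c) (abs_le.mpr ⟨?_, ?_⟩)
      · linarith [Nat.lt_floor_add_one s]
      · linarith [Nat.floor_le hs]
    linarith [le_abs_self (c * ⌊s⌋₊ - c * s)]
  exact hfloor.trans ((h.comp_tendsto tendsto_nat_floor_atTop).trans hexp)

theorem hasDerivAt_exp_neg_smul_mul_mul_exp_neg_smul (a p : 𝔸) (s : ℝ) :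
    HasDerivAt (fun s : ℝ => exp (-(s • a)) * p * exp (-(s • a)))
      (-(exp (-(s • a)) * (a * p + p * a) * exp (-(s • a)))) s := by
  have hE := hasDerivAt_exp_smul_const (-a) s
  have hE' := hasDerivAt_exp_smul_const' (-a) s
  simp only [smul_neg] at hE hE'
  exact ((hE.mul_const p).mul hE').congr_deriv (by noncomm_ring)

theorem integrableOn_exp_neg_smul_mul_mul_exp_neg_smul (hε : 0 < ε)
    (hdecay : (fun s : ℝ => exp (-(s • a))) =O[atTop] fun s => Real.exp (-ε * s)) (m : 𝔸) :
    IntegrableOn (fun s : ℝ => exp (-(s • a)) * m * exp (-(s • a))) (Ioi 0) := by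
  have hcont : Continuous fun s : ℝ => exp (-(s • a)) * m * exp (-(s • a)) := by
    have := (differentiable_exp_smul_const ℝ (-a)).continuous
    simp only [smul_neg] at this
    fun_prop
  refine IntegrableOn.mono_set ?_ Ioi_subset_Ici_self
  exact hcont.locallyIntegrable.locallyIntegrableOn _ |>.integrableOn_of_isBigO_atTop
    (isBigO_exp_neg_smul_mul_mul_exp_neg_smul hε hdecay m)
    ⟨Ioi 0, Ioi_mem_atTop 0, exp_neg_integrableOn_Ioi 0 hε⟩

theorem integral_exp_neg_smul_mul_mul_exp_neg_smul (hε : 0 < ε)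
    (hdecay : (fun s : ℝ => exp (-(s • a))) =O[atTop] fun s => Real.exp (-ε * s))
    {m p : 𝔸} (h : a * p + p * a = m) :
    ∫ s in Ioi (0 : ℝ), exp (-(s • a)) * m * exp (-(s • a)) = p := by
  have hlim : Tendsto (fun s : ℝ => exp (-(s • a)) * p * exp (-(s • a))) atTop (𝓝 0) :=
    (isBigO_exp_neg_smul_mul_mul_exp_neg_smul hε hdecay p).trans_tendsto
      (Real.tendsto_exp_comp_nhds_zero.mpr
        (tendsto_id.const_mul_atTop_of_neg (neg_lt_zero.mpr hε)))
  have hftc := integral_Ioi_of_hasDerivAt_of_tendsto'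
    (fun s _ => hasDerivAt_exp_neg_smul_mul_mul_exp_neg_smul a p s)
    (integrableOn_exp_neg_smul_mul_mul_exp_neg_smul hε hdecay (a * p + p * a)).neg hlim
  rw [integral_neg, h] at hftc
  simpa [exp_zero] using hftc

theorem exists_mul_add_mul_eq [FiniteDimensional ℝ 𝔸] (hε : 0 < ε)
    (hdecay : (fun s : ℝ => exp (-(s • a))) =O[atTop] fun s => Real.exp (-ε * s)) (m : 𝔸) :
    ∃ p, a * p + p * a = m := by
  have hinj : Function.Injective (LinearMap.mulLeft ℝ a + LinearMap.mulRight ℝ a) := by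
    refine (injective_iff_map_eq_zero _).mpr fun p hp => ?_
    rw [← integral_exp_neg_smul_mul_mul_exp_neg_smul hε hdecay hp]
    simp
  exact LinearMap.injective_iff_surjective.mp hinj m

end RealBanachAlgebra

namespace Matrix

variable {ι : Type*} [Fintype ι] [DecidableEq ι]

-- The topology of the L² operator norm is the product topology up to instance-reducible
-- defeq (that of the ℓ∞ operator norm is not), so `Integrable` and `∫` of matrix-valued
-- functions elaborate against the default topology on matrices.
open scoped Norms.L2Operator

theorem exp_mulVec_of_mulVec_eq_smul {𝕂 : Type*} [RCLike 𝕂] {B : Matrix ι ι 𝕂} {v : ι → 𝕂}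
    {μ : 𝕂} (h : B *ᵥ v = μ • v) : exp B *ᵥ v = exp μ • v := by
  have hpow : ∀ k : ℕ, B ^ k *ᵥ v = μ ^ k • v := by
    intro k
    induction k with
    | zero => simp
    | succ k ih => rw [pow_succ', ← mulVec_mulVec, ih, mulVec_smul, h, smul_smul, ← pow_succ]
  refine ((exp_series_hasSum_exp' (𝕂 := 𝕂) B).map (mulVec.addMonoidHomLeft v)
    (continuous_id.matrix_mulVec continuous_const)).unique ?_
  convert (exp_series_hasSum_exp' (𝕂 := 𝕂) μ).smul_const v using 2 with k
  exact (smul_mulVec _ _ _).trans (by rw [hpow, smul_smul, smul_eq_mul])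

theorem spectrum_exp_subset (B : Matrix ι ι ℂ) :
    spectrum ℂ (exp B) ⊆ Complex.exp '' spectrum ℂ B := by
  -- `B` commutes with `exp B`, so it has an eigenvector `w` in the `μ`-eigenspace of `exp B`.
  intro μ hμ
  rw [← spectrum_toLin', ← Module.End.hasEigenvalue_iff_mem_spectrum] at hμ
  have hcomm : Commute (toLin' (exp B)) (toLin' B) := (Commute.refl B).exp_left.map toLinAlgEquiv'
  have : Nontrivial (Module.End.eigenspace (toLin' (exp B)) μ) :=
    Submodule.nontrivial_iff_ne_bot.mpr hμ
  obtain ⟨l, hl⟩ := Module.End.exists_eigenvalue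
    ((toLin' B).restrict (Module.End.mapsTo_genEigenspace_of_comm hcomm μ 1))
  obtain ⟨⟨w, hwμ⟩, hw⟩ := hl.exists_hasEigenvector
  have hwl : B *ᵥ w = l • w := congrArg Subtype.val hw.apply_eq_smul
  have hw0 : w ≠ 0 := fun h => hw.2 (Subtype.ext h)
  refine ⟨l, ?_, ?_⟩
  · rw [← spectrum_toLin']
    exact Module.End.HasEigenvalue.mem_spectrum
      (Module.End.hasEigenvalue_of_hasEigenvector ⟨Module.End.mem_eigenspace_iff.mpr hwl, hw0⟩)
  · have hwexp : exp B *ᵥ w = μ • w := Module.End.mem_eigenspace_iff.mp hwμ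
    rw [exp_mulVec_of_mulVec_eq_smul hwl] at hwexp
    rw [Complex.exp_eq_exp_ℂ]
    exact smul_left_injective ℂ hw0 hwexp

theorem spectralRadius_exp_neg_lt_one {A : Matrix ι ι ℂ} (hA : ∀ μ ∈ spectrum ℂ A, 0 < μ.re) :
    spectralRadius ℂ (exp (-A)) < 1 := by
  rcases (spectrum ℂ (exp (-A))).eq_empty_or_nonempty with hempty | hne
  · simp [spectralRadius, hempty]
  refine spectrum.spectralRadius_lt_of_forall_lt_of_nonempty hne fun z hz => ?_
  obtain ⟨l, hl, rfl⟩ := spectrum_exp_subset (-A) hz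
  rw [← spectrum.neg_eq] at hl
  have hre : l.re < 0 := by simpa using hA (-l) hl
  rw [← NNReal.coe_lt_coe, coe_nnnorm, Complex.norm_exp]
  simpa using hre

theorem isBigO_exp_neg_smul {A : Matrix ι ι ℂ} (hA : ∀ μ ∈ spectrum ℂ A, 0 < μ.re) :
    ∃ ε > 0, (fun s : ℝ => exp (-(s • A))) =O[atTop] fun s => Real.exp (-ε * s) := by
  obtain ⟨ε, hε, hpow⟩ := exists_isBigO_pow_of_spectralRadius_lt_one (A := Matrix ι ι ℂ)
    (spectralRadius_exp_neg_lt_one hA)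
  have h := isBigO_exp_smul_of_isBigO_pow (a := -A) (c := -ε) hpow
  simp only [smul_neg] at h
  exact ⟨ε, hε, h⟩

theorem integrable_apply {X : Type*} [MeasurableSpace X] {μ : Measure X} {f : X → Matrix ι ι ℂ}
    (hf : Integrable f μ) (i j : ι) : Integrable (fun x => f x i j) μ :=
  (entryLinearMap ℝ ℂ i j).toContinuousLinearMap.integrable_comp hf

theorem integral_apply {X : Type*} [MeasurableSpace X] {μ : Measure X} {f : X → Matrix ι ι ℂ}
    (hf : Integrable f μ) (i j : ι) : (∫ x, f x ∂μ) i j = ∫ x, f x i j ∂μ :=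
  ((entryLinearMap ℝ ℂ i j).toContinuousLinearMap.integral_comp_comm hf).symm

end Matrix

open Matrix Complex MeasureTheory

/-- if all eigenvalues of A have positive real part, then
s ↦ e^{−sA} M e^{−sA} is integrable (entrywise) on [0,∞), the entrywise
integral P = ∫₀^∞ e^{−sA} M e^{−sA} ds satisfies AP + PA = M, and P is the
unique matrix with this property. -/
theorem sylvester_solution_integral (n : ℕ)
    (A M : Matrix (Fin n) (Fin n) ℂ)
    (hspec : ∀ μ ∈ spectrum ℂ A, 0 < μ.re) :
    (∀ j k : Fin n, IntegrableOn
      (fun s : ℝ =>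
        (NormedSpace.exp (-(s • A)) * M * NormedSpace.exp (-(s • A))) j k)
      (Set.Ioi 0)) ∧
    (A * (Matrix.of fun j k => ∫ s in Set.Ioi (0 : ℝ),
        (NormedSpace.exp (-(s • A)) * M * NormedSpace.exp (-(s • A))) j k) +
      (Matrix.of fun j k => ∫ s in Set.Ioi (0 : ℝ),
        (NormedSpace.exp (-(s • A)) * M * NormedSpace.exp (-(s • A))) j k) * A
      = M) ∧
    (∀ P' : Matrix (Fin n) (Fin n) ℂ, A * P' + P' * A = M →
      P' = Matrix.of fun j k => ∫ s in Set.Ioi (0 : ℝ),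
        (NormedSpace.exp (-(s • A)) * M * NormedSpace.exp (-(s • A))) j k) := by
  open scoped Matrix.Norms.L2Operator in
  obtain ⟨ε, hε, hdecay⟩ := isBigO_exp_neg_smul hspec
  have hint := integrableOn_exp_neg_smul_mul_mul_exp_neg_smul hε hdecay M
  have hentries : (of fun j k => ∫ s in Ioi (0 : ℝ), (exp (-(s • A)) * M * exp (-(s • A))) j k) =
      ∫ s in Ioi (0 : ℝ), exp (-(s • A)) * M * exp (-(s • A)) := by
    ext j k
    exact (Matrix.integral_apply hint j k).symm
  rw [hentries]
  obtain ⟨P, hP⟩ := exists_mul_add_mul_eq hε hdecay M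
  refine ⟨Matrix.integrable_apply hint, ?_, fun P' hP' => ?_⟩
  · rwa [integral_exp_neg_smul_mul_mul_exp_neg_smul hε hdecay hP]
  · rw [integral_exp_neg_smul_mul_mul_exp_neg_smul hε hdecay hP']
end

section
/- (Theorem A.3) Let A, H, P be 2p×2p complex matrices whose 2×2 blocks all lie in Σ, such that all eigenvalues of A have positive real part, H commutes with A, and P is invertible. Then for each fixed t ∈ ℝ, the set of x ∈ ℝ for which the matrix e^{2xA}·e^{−tH} + P is singular is finite, and likewise the set of x ∈ ℝ for which e^{−2xA}·e^{−tH} + P is singular is finite. -/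
open Matrix Complex

/-!
For `E = exp (-t • H)`, the function `z ↦ det (exp (z • A) * E + P)` is entire, so its real zeros
are finite once they are confined to a compact set. As `x → -∞`, `exp (x • A) → 0` because on each
generalised eigenspace of `A` it is a polynomial in `x` times `exp (x μ)` with `Re μ > 0`; hence the
matrix tends to the invertible `P`. As `x → +∞`, factoring out `exp (x • A)` leaves
`E + exp (-x • A) * P → E`, again invertible. The sets in the theorem are preimages of this finite
set under `x ↦ ±2x`.
-/

open Filter Topology
open scoped Nat

theorem Differentiable.finite_inter_setOf_eq_zero_of_isCompact {g : ℂ → ℂ}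
    (hg : Differentiable ℂ g) (hg0 : ∃ z, g z ≠ 0) {K : Set ℂ} (hK : IsCompact K) :
    (K ∩ {z | g z = 0}).Finite := by
  obtain ⟨z, hz⟩ := hg0
  have hne : ∀ᶠ z in codiscrete ℂ, g z ≠ 0 :=
    ((analyticOnNhd_univ_iff_differentiable.mpr hg).eqOn_zero_or_eventually_ne_zero_of_preconnected
      isPreconnected_univ).resolve_left fun h => hz (h (Set.mem_univ z))
  simpa [Set.sdiff_eq, Set.compl_ofPred] using
    hK.finite_sdiff_of_mem_codiscreteWithin (codiscreteWithin_mono (Set.subset_univ K) hne)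

theorem Differentiable.finite_setOf_ofReal_eq_zero {g : ℂ → ℂ} (hg : Differentiable ℂ g)
    (h : ∀ᶠ x : ℝ in cocompact ℝ, g x ≠ 0) : {x : ℝ | g x = 0}.Finite := by
  obtain ⟨L, hL, hLc⟩ := mem_cocompact.mp h
  obtain ⟨x₀, hx₀⟩ := h.exists
  have hfin := hg.finite_inter_setOf_eq_zero_of_isCompact ⟨x₀, hx₀⟩ (hL.image continuous_ofReal)
  refine (hfin.preimage ofReal_injective.injOn).subset fun x hx => ?_
  have hxL : x ∈ L := by_contra fun hxL => hLc hxL hx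
  exact ⟨Set.mem_image_of_mem _ hxL, hx⟩

theorem tendsto_cexp_mul_mul_pow_atBot {μ : ℂ} (hμ : 0 < μ.re) (l : ℕ) :
    Tendsto (fun x : ℝ => cexp (x * μ) * (x : ℂ) ^ l) atBot (𝓝 0) := by
  rw [← tendsto_comp_neg_atTop_iff]
  refine squeeze_zero_norm' ?_ ((tendsto_rpow_mul_exp_neg_mul_atTop_nhds_zero l μ.re hμ))
  filter_upwards [eventually_ge_atTop 0] with x hx
  simp [norm_exp, Real.rpow_natCast, abs_of_nonneg hx, mul_comm]

section MatrixExp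

variable {n : Type*} [Fintype n] [DecidableEq n]

theorem Matrix.differentiable_det {𝕜 : Type*} [NontriviallyNormedField 𝕜] {M : 𝕜 → Matrix n n 𝕜}
    (hM : ∀ i j, Differentiable 𝕜 fun x => M x i j) : Differentiable 𝕜 fun x => (M x).det := by
  simp only [det_apply']
  exact Differentiable.fun_sum fun σ _ =>
    (Differentiable.fun_finsetProd fun i _ => hM (σ i) i).const_mul _

theorem Matrix.mem_spectrum_of_pow_sub_smul_mulVec_eq_zero {R : Type*} [CommRing R]
    {A : Matrix n n R} {μ : R} {w : n → R} {k : ℕ} (hw : (A - μ • 1) ^ k *ᵥ w = 0) (hw0 : w ≠ 0) :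
    μ ∈ spectrum R A := by
  refine by_contra fun hμ => hw0 ?_
  have hunit : IsUnit ((A - μ • 1) ^ k) := by
    rw [spectrum.notMem_iff, Algebra.algebraMap_eq_smul_one, ← IsUnit.neg_iff, neg_sub] at hμ
    exact hμ.pow k
  obtain ⟨u, hu⟩ := hunit
  rw [← hu] at hw
  simpa [mulVec_mulVec] using congrArg (mulVec (↑u⁻¹ : Matrix n n R)) hw

section LinftyOp

-- Any submultiplicative norm would do here: the statements below do not mention it.
attribute [local instance] Matrix.linftyOpNormedRing Matrix.linftyOpNormedAlgebra

theorem Matrix.differentiable_exp_smul_apply (A : Matrix n n ℂ) (i j : n) :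
    Differentiable ℂ fun z : ℂ => NormedSpace.exp (z • A) i j := by
  have hexp : Differentiable ℂ fun z : ℂ => NormedSpace.exp (z • A) :=
    fun z => (hasDerivAt_exp_smul_const A z).differentiableAt
  let entry : Matrix n n ℂ →ₗ[ℂ] ℂ :=
    (LinearMap.proj j).comp (LinearMap.proj i : Matrix n n ℂ →ₗ[ℂ] n → ℂ)
  exact entry.toContinuousLinearMap.differentiable.comp hexp

theorem Matrix.exp_mulVec_eq_sum_of_pow_mulVec_eq_zero {B : Matrix n n ℂ} {w : n → ℂ} {k : ℕ}
    (hw : B ^ k *ᵥ w = 0) :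
    NormedSpace.exp B *ᵥ w = ∑ l ∈ Finset.range k, (l ! : ℂ)⁻¹ • (B ^ l *ᵥ w) := by
  let applyTo : Matrix n n ℂ →ₗ[ℂ] (n → ℂ) := (mulVecBilin ℂ ℂ).flip w
  have hsum := (NormedSpace.exp_series_hasSum_exp' (𝕂 := ℂ) B).mapL applyTo.toContinuousLinearMap
  simp only [applyTo, LinearMap.coe_toContinuousLinearMap', LinearMap.flip_apply,
    mulVecBilin_apply, smul_mulVec] at hsum
  refine hsum.unique (hasSum_sum_of_ne_finset_zero fun l hl => ?_)
  obtain ⟨d, rfl⟩ := Nat.exists_eq_add_of_le (not_lt.mp (Finset.mem_range.not.mp hl))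
  rw [add_comm, pow_add, ← mulVec_mulVec, hw, mulVec_zero, smul_zero]

theorem Matrix.exp_smul_mulVec_eq_sum_of_pow_mulVec_eq_zero {A : Matrix n n ℂ} {μ : ℂ}
    {w : n → ℂ} {k : ℕ} (hw : (A - μ • 1) ^ k *ᵥ w = 0) (z : ℂ) :
    NormedSpace.exp (z • A) *ᵥ w = ∑ l ∈ Finset.range k,
      (cexp (z * μ) * z ^ l) • ((l ! : ℂ)⁻¹ • ((A - μ • 1) ^ l *ᵥ w)) := by
  set B := A - μ • 1
  have hsplit : z • A = (z * μ) • (1 : Matrix n n ℂ) + z • B := by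
    rw [smul_sub, smul_smul, add_sub_cancel]
  have hscalar : NormedSpace.exp ((z * μ) • (1 : Matrix n n ℂ)) = cexp (z * μ) • 1 := by
    rw [exp_eq_exp_ℂ, Algebra.smul_def, mul_one, Algebra.smul_def, mul_one]
    exact (NormedSpace.algebraMap_exp_comm (z * μ)).symm
  have hzB : (z • B) ^ k *ᵥ w = 0 := by rw [smul_pow, smul_mulVec, hw, smul_zero]
  rw [hsplit, exp_add_of_commute _ _ ((Commute.one_left B).smul_left _ |>.smul_right _), hscalar,
    smul_one_mul, smul_mulVec, exp_mulVec_eq_sum_of_pow_mulVec_eq_zero hzB, Finset.smul_sum]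
  refine Finset.sum_congr rfl fun l _ => ?_
  rw [smul_pow, smul_mulVec, smul_comm _ (z ^ l), smul_smul, smul_smul]

end LinftyOp

theorem Matrix.differentiable_det_exp_smul_mul_add (A E P : Matrix n n ℂ) :
    Differentiable ℂ fun z : ℂ => (NormedSpace.exp (z • A) * E + P).det :=
  differentiable_det fun i j => by
    simp only [add_apply, mul_apply]
    exact (Differentiable.fun_sum fun l _ =>
      (differentiable_exp_smul_apply A i l).mul_const _).add_const _

theorem Matrix.tendsto_exp_smul_mulVec_atBot_of_pow_mulVec_eq_zero {A : Matrix n n ℂ} {μ : ℂ}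
    (hμ : 0 < μ.re) {w : n → ℂ} {k : ℕ} (hw : (A - μ • 1) ^ k *ᵥ w = 0) :
    Tendsto (fun x : ℝ => NormedSpace.exp (x • A) *ᵥ w) atBot (𝓝 0) := by
  simp only [← Complex.coe_smul, exp_smul_mulVec_eq_sum_of_pow_mulVec_eq_zero hw]
  simpa using tendsto_finsetSum (Finset.range k) fun l _ =>
    (tendsto_cexp_mul_mul_pow_atBot hμ l).smul_const ((l ! : ℂ)⁻¹ • ((A - μ • 1) ^ l *ᵥ w))

theorem Matrix.tendsto_exp_smul_mulVec_atBot {A : Matrix n n ℂ}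
    (hA : ∀ μ ∈ spectrum ℂ A, 0 < μ.re) (v : n → ℂ) :
    Tendsto (fun x : ℝ => NormedSpace.exp (x • A) *ᵥ v) atBot (𝓝 0) := by
  have hv : v ∈ ⨆ μ, Module.End.maxGenEigenspace (toLinAlgEquiv' A) μ := by
    rw [Module.End.iSup_maxGenEigenspace_eq_top]; trivial
  refine Submodule.iSup_induction _ (motive := fun w =>
    Tendsto (fun x : ℝ => NormedSpace.exp (x • A) *ᵥ w) atBot (𝓝 0)) hv (fun μ w hw => ?_)
    (by simp) (fun u w hu hw => by simpa [mulVec_add] using hu.add hw)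
  obtain ⟨k, hk⟩ := (Module.End.mem_maxGenEigenspace _ μ w).mp hw
  have hpow : (A - μ • 1) ^ k *ᵥ w = 0 := by
    rwa [← map_one toLinAlgEquiv', ← map_smul, ← map_sub, ← map_pow] at hk
  rcases eq_or_ne w 0 with rfl | hw0
  · simp
  exact tendsto_exp_smul_mulVec_atBot_of_pow_mulVec_eq_zero
    (hA μ (mem_spectrum_of_pow_sub_smul_mulVec_eq_zero hpow hw0)) hpow

theorem Matrix.tendsto_exp_smul_atBot {A : Matrix n n ℂ} (hA : ∀ μ ∈ spectrum ℂ A, 0 < μ.re) :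
    Tendsto (fun x : ℝ => NormedSpace.exp (x • A)) atBot (𝓝 0) := by
  refine tendsto_pi_nhds.mpr fun i => tendsto_pi_nhds.mpr fun j => ?_
  simpa [mulVec_single] using
    tendsto_pi_nhds.mp (tendsto_exp_smul_mulVec_atBot hA (Pi.single j 1)) i

theorem Matrix.eventually_isUnit_of_tendsto {K α : Type*} [Field K] [TopologicalSpace K]
    [IsTopologicalRing K] [T1Space K] {l : Filter α} {M : α → Matrix n n K} {P : Matrix n n K}
    (hM : Tendsto M l (𝓝 P)) (hP : IsUnit P) : ∀ᶠ x in l, IsUnit (M x) := by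
  simp only [isUnit_iff_isUnit_det, isUnit_iff_ne_zero] at hP ⊢
  exact ((continuous_id.matrix_det.tendsto P).comp hM).eventually_ne hP

theorem Matrix.eventually_isUnit_exp_smul_mul_add_atBot {A : Matrix n n ℂ}
    (hA : ∀ μ ∈ spectrum ℂ A, 0 < μ.re) (E : Matrix n n ℂ) {P : Matrix n n ℂ} (hP : IsUnit P) :
    ∀ᶠ x : ℝ in atBot, IsUnit (NormedSpace.exp (x • A) * E + P) :=
  eventually_isUnit_of_tendsto
    (by simpa using ((tendsto_exp_smul_atBot hA).mul_const E).add_const P) hP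

theorem Matrix.eventually_isUnit_exp_smul_mul_add_atTop {A E : Matrix n n ℂ}
    (hA : ∀ μ ∈ spectrum ℂ A, 0 < μ.re) (hE : IsUnit E) (P : Matrix n n ℂ) :
    ∀ᶠ x : ℝ in atTop, IsUnit (NormedSpace.exp (x • A) * E + P) := by
  have hdecay := (tendsto_exp_smul_atBot hA).comp tendsto_neg_atTop_atBot
  have hfactor : ∀ᶠ x : ℝ in atTop, IsUnit (E + NormedSpace.exp ((-x) • A) * P) :=
    eventually_isUnit_of_tendsto (by simpa using tendsto_const_nhds.add (hdecay.mul_const P)) hE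
  filter_upwards [hfactor] with x hx
  have hsplit : NormedSpace.exp (x • A) * E + P =
      NormedSpace.exp (x • A) * (E + NormedSpace.exp ((-x) • A) * P) := by
    rw [mul_add, ← mul_assoc,
      ← exp_add_of_commute _ _ ((Commute.refl A).smul_left _ |>.smul_right _), neg_smul,
      add_neg_cancel, NormedSpace.exp_zero, one_mul]
  rw [hsplit]
  exact (isUnit_exp _).mul hx

theorem Matrix.finite_setOf_not_isUnit_exp_smul_mul_add {A E P : Matrix n n ℂ}
    (hA : ∀ μ ∈ spectrum ℂ A, 0 < μ.re) (hE : IsUnit E) (hP : IsUnit P) :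
    {x : ℝ | ¬ IsUnit (NormedSpace.exp (x • A) * E + P)}.Finite := by
  have hdet : ∀ x : ℝ, IsUnit (NormedSpace.exp (x • A) * E + P) ↔
      (NormedSpace.exp ((x : ℂ) • A) * E + P).det ≠ 0 := by
    simp [isUnit_iff_isUnit_det, Complex.coe_smul]
  simp only [hdet, not_not]
  refine (differentiable_det_exp_smul_mul_add A E P).finite_setOf_ofReal_eq_zero ?_
  rw [cocompact_eq_atBot_atTop, eventually_sup]
  exact ⟨(eventually_isUnit_exp_smul_mul_add_atBot hA E hP).mono fun x => (hdet x).mp,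
    (eventually_isUnit_exp_smul_mul_add_atTop hA hE P).mono fun x => (hdet x).mp⟩

end MatrixExp

theorem finitely_many_singular_points_general (p : ℕ)
    (A H P : Matrix (Fin p × Fin 2) (Fin p × Fin 2) ℂ)
    (hspec : ∀ μ ∈ spectrum ℂ A, 0 < μ.re)
    (hP : IsUnit P) (t : ℝ) :
    {x : ℝ | ¬ IsUnit (NormedSpace.exp ((2 * x) • A) *
        NormedSpace.exp ((-t) • H) + P)}.Finite ∧
    {x : ℝ | ¬ IsUnit (NormedSpace.exp ((-(2 * x)) • A) *
        NormedSpace.exp ((-t) • H) + P)}.Finite := by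
  have hfinite := finite_setOf_not_isUnit_exp_smul_mul_add hspec (isUnit_exp ((-t) • H)) hP
  exact ⟨hfinite.preimage (mul_right_injective₀ two_ne_zero).injOn,
    hfinite.preimage (neg_injective.comp (mul_right_injective₀ two_ne_zero)).injOn⟩

/-- Theorem A.3: with A, H, P ∈ Σ^{p×p}, all eigenvalues of A of
positive real part, AH = HA and P invertible, for each fixed t ∈ ℝ the matrix
e^{±2xA} e^{−tH} + P is singular for at most finitely many x ∈ ℝ. -/
theorem finitely_many_singular_points (p : ℕ)
    (A H P : Matrix (Fin p × Fin 2) (Fin p × Fin 2) ℂ)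
    (hAblocks : ∀ j k : Fin p, memSigma (fun a b => A (j, a) (k, b)))
    (hHblocks : ∀ j k : Fin p, memSigma (fun a b => H (j, a) (k, b)))
    (hPblocks : ∀ j k : Fin p, memSigma (fun a b => P (j, a) (k, b)))
    (hspec : ∀ μ ∈ spectrum ℂ A, 0 < μ.re)
    (hcomm : A * H = H * A)
    (hP : IsUnit P) (t : ℝ) :
    {x : ℝ | ¬ IsUnit (NormedSpace.exp ((2 * x) • A) *
        NormedSpace.exp ((-t) • H) + P)}.Finite ∧
    {x : ℝ | ¬ IsUnit (NormedSpace.exp ((-(2 * x)) • A) *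
        NormedSpace.exp ((-t) • H) + P)}.Finite :=
  finitely_many_singular_points_general p A H P hspec hP t
end

section
/- (Formulas (5.18)–(5.19)) Let A, P be n×n complex matrices, B an n×2 matrix, C a 2×n matrix, satisfying the Sylvester equation AP + PA = BC with P invertible, and let λ ∈ ℂ be such that λI + iA and λI − iA are invertible. Then the 2×2 matrices I₂ − iC·P⁻¹·(λI + iA)⁻¹·B and I₂ + iC·(λI − iA)⁻¹·P⁻¹·B are mutually inverse: their product in either order equals I₂. -/
open Matrix Complex

/-- Formulas (5.18)–(5.19): with AP + PA = BC, P invertible, and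
λI ± iA invertible, the 2×2 matrices I₂ − iCP⁻¹(λI+iA)⁻¹B and
I₂ + iC(λI−iA)⁻¹P⁻¹B are mutually inverse. -/
theorem transmission_coefficients_inverse (n : ℕ)
    (A P : Matrix (Fin n) (Fin n) ℂ)
    (B : Matrix (Fin n) (Fin 2) ℂ) (C : Matrix (Fin 2) (Fin n) ℂ)
    (hSyl : A * P + P * A = B * C) (hP : IsUnit P)
    (lam : ℂ)
    (hplus : IsUnit (lam • (1 : Matrix (Fin n) (Fin n) ℂ) + Complex.I • A))
    (hminus : IsUnit (lam • (1 : Matrix (Fin n) (Fin n) ℂ) - Complex.I • A)) :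
    ((1 : Matrix (Fin 2) (Fin 2) ℂ) -
        Complex.I • (C * P⁻¹ * (lam • (1 : Matrix (Fin n) (Fin n) ℂ) + Complex.I • A)⁻¹ * B)) *
      ((1 : Matrix (Fin 2) (Fin 2) ℂ) +
        Complex.I • (C * (lam • (1 : Matrix (Fin n) (Fin n) ℂ) - Complex.I • A)⁻¹ * P⁻¹ * B))
      = 1 ∧
    ((1 : Matrix (Fin 2) (Fin 2) ℂ) +
        Complex.I • (C * (lam • (1 : Matrix (Fin n) (Fin n) ℂ) - Complex.I • A)⁻¹ * P⁻¹ * B)) *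
      ((1 : Matrix (Fin 2) (Fin 2) ℂ) -
        Complex.I • (C * P⁻¹ * (lam • (1 : Matrix (Fin n) (Fin n) ℂ) + Complex.I • A)⁻¹ * B))
      = 1 := by
  set Mp := lam • (1 : Matrix (Fin n) (Fin n) ℂ) + Complex.I • A with hMp
  set Mm := lam • (1 : Matrix (Fin n) (Fin n) ℂ) - Complex.I • A with hMm
  have hMpd := (Matrix.isUnit_iff_isUnit_det _).mp hplus
  have hMmd := (Matrix.isUnit_iff_isUnit_det _).mp hminus
  have hPd := (Matrix.isUnit_iff_isUnit_det _).mp hP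
  have hkey : B * C = (-Complex.I) • (Mp * P - P * Mm) := by
    have h1 : Mp * P - P * Mm = Complex.I • (B * C) := by
      rw [← hSyl, hMp, hMm]
      simp only [add_mul, Matrix.mul_sub, smul_mul_assoc, mul_smul_comm, one_mul, mul_one, smul_add]
      abel
    rw [h1, smul_smul]
    simp
  set X := C * P⁻¹ * Mp⁻¹ * B with hX
  set Y := C * Mm⁻¹ * P⁻¹ * B with hY
  have hXY : X * Y = Complex.I • X - Complex.I • Y := by
    have e1 : X * Y = C * P⁻¹ * (Mp⁻¹ * (B * C) * Mm⁻¹) * (P⁻¹ * B) := by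
      rw [hX, hY]; simp only [Matrix.mul_assoc]
    rw [e1, hkey, hX, hY]
    simp only [Matrix.mul_smul, Matrix.smul_mul, Matrix.mul_sub, Matrix.sub_mul, smul_sub, smul_smul,
      Matrix.neg_mul, Matrix.mul_neg, neg_smul, smul_mul_assoc, mul_smul_comm, Matrix.mul_assoc, Matrix.nonsing_inv_mul_cancel_left _ _ hMpd,
      Matrix.mul_nonsing_inv_cancel_left _ _ hMmd,
      Matrix.nonsing_inv_mul_cancel_left _ _ hPd,
      Matrix.mul_nonsing_inv_cancel_left _ _ hPd,
      Matrix.nonsing_inv_mul_cancel_left _ _ hMmd,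
      Matrix.mul_nonsing_inv_cancel_left _ _ hMpd,
      Matrix.mul_nonsing_inv _ hMmd, Matrix.mul_nonsing_inv _ hPd,
      Matrix.mul_nonsing_inv _ hMpd, mul_one, neg_smul, neg_sub]
    simp only [mul_sub, Matrix.sub_mul, Matrix.mul_add, Matrix.add_mul, Matrix.mul_neg, Matrix.neg_mul, Matrix.mul_smul, Matrix.smul_mul,
      smul_mul_assoc, mul_smul_comm, Matrix.mul_assoc, smul_smul, neg_smul, sub_neg_eq_add,
      Matrix.nonsing_inv_mul_cancel_left _ _ hMpd, Matrix.mul_nonsing_inv_cancel_left _ _ hMmd,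
      Matrix.nonsing_inv_mul_cancel_left _ _ hPd, Matrix.mul_nonsing_inv_cancel_left _ _ hPd,
      Matrix.nonsing_inv_mul_cancel_left _ _ hMmd, Matrix.mul_nonsing_inv_cancel_left _ _ hMpd]
    module
  have hYX : Y * X = Complex.I • X - Complex.I • Y := by
    have e1 : Y * X = C * Mm⁻¹ * (P⁻¹ * (B * C) * P⁻¹) * (Mp⁻¹ * B) := by
      rw [hX, hY]; simp only [Matrix.mul_assoc]
    rw [e1, hkey, hX, hY]
    simp only [Matrix.mul_smul, Matrix.smul_mul, Matrix.mul_sub, Matrix.sub_mul, smul_sub, smul_smul,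
      Matrix.neg_mul, Matrix.mul_neg, neg_smul, smul_mul_assoc, mul_smul_comm, Matrix.mul_assoc, Matrix.nonsing_inv_mul_cancel_left _ _ hMpd,
      Matrix.mul_nonsing_inv_cancel_left _ _ hMmd,
      Matrix.nonsing_inv_mul_cancel_left _ _ hPd,
      Matrix.mul_nonsing_inv_cancel_left _ _ hPd,
      Matrix.nonsing_inv_mul_cancel_left _ _ hMmd,
      Matrix.mul_nonsing_inv_cancel_left _ _ hMpd,
      Matrix.mul_nonsing_inv _ hMmd, Matrix.mul_nonsing_inv _ hPd,
      Matrix.mul_nonsing_inv _ hMpd, mul_one, neg_smul, neg_sub]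
    simp only [mul_sub, Matrix.sub_mul, Matrix.mul_add, Matrix.add_mul, Matrix.mul_neg, Matrix.neg_mul, Matrix.mul_smul, Matrix.smul_mul,
      smul_mul_assoc, mul_smul_comm, Matrix.mul_assoc, smul_smul, neg_smul, sub_neg_eq_add,
      Matrix.nonsing_inv_mul_cancel_left _ _ hMpd, Matrix.mul_nonsing_inv_cancel_left _ _ hMmd,
      Matrix.nonsing_inv_mul_cancel_left _ _ hPd, Matrix.mul_nonsing_inv_cancel_left _ _ hPd,
      Matrix.nonsing_inv_mul_cancel_left _ _ hMmd, Matrix.mul_nonsing_inv_cancel_left _ _ hMpd]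
    module
  constructor
  · show ((1 : Matrix (Fin 2) (Fin 2) ℂ) - Complex.I • X) * (1 + Complex.I • Y) = 1
    rw [mul_add, Matrix.sub_mul, Matrix.sub_mul, mul_one, one_mul, smul_mul_smul_comm, hXY]
    rw [Complex.I_mul_I, smul_sub, neg_one_smul, neg_one_smul, mul_one]
    abel
  · show ((1 : Matrix (Fin 2) (Fin 2) ℂ) + Complex.I • Y) * (1 - Complex.I • X) = 1
    rw [mul_sub, Matrix.add_mul, Matrix.add_mul, mul_one, one_mul, smul_mul_smul_comm, hYX]
    rw [Complex.I_mul_I, smul_sub, neg_one_smul, neg_one_smul, mul_one]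
    abel
end

section
/- Let A, P be n×n complex matrices, B an n×2 matrix, C a 2×n matrix, satisfying the Sylvester equation AP + PA = BC with P invertible, and let λ ∈ ℂ be such that λI + iA and λI − iA are invertible. Then det(I₂ + iC·(λI − iA)⁻¹·P⁻¹·B) = det(λI + iA) / det(λI − iA). -/
/-!
The Sylvester equation `A P + P A = B C` says that conjugating `λ + iA` by `P` gives `λ - iA`
plus the rank-two term `i B C`. Hence `(λ - iA)⁻¹ P⁻¹ (λ + iA) P = 1 + i (λ - iA)⁻¹ P⁻¹ B C`,
and the determinant of the right-hand side, an `n × n` determinant, equals the `2 × 2`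
determinant of the theorem by Sylvester's determinant identity `det (1 + X Y) = det (1 + Y X)`.
-/

open Matrix

theorem add_smul_mul_eq_mul_sub_smul_add {R M : Type*} [CommRing R] [Ring M] [Algebra R M]
    (lam c : R) (A P : M) :
    (lam • 1 + c • A) * P = P * (lam • 1 - c • A) + c • (A * P + P * A) := by
  simp only [add_mul, mul_sub, smul_mul_assoc, mul_smul_comm, one_mul, mul_one, smul_add]
  abel

theorem det_one_add_mul_inv_mul_inv_mul_eq_div {K m n : Type*} [Field K]
    [Fintype m] [DecidableEq m] [Fintype n] [DecidableEq n]
    {N M P : Matrix n n K} {X : Matrix n m K} {Y : Matrix m n K}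
    (hP : IsUnit P) (hM : IsUnit M) (h : N * P = P * M + X * Y) :
    (1 + Y * M⁻¹ * P⁻¹ * X).det = N.det / M.det := by
  have hconj : 1 + M⁻¹ * P⁻¹ * X * Y = M⁻¹ * (P⁻¹ * N * P) := by
    rw [Matrix.mul_assoc P⁻¹, h, Matrix.mul_add,
      nonsing_inv_mul_cancel_left _ _ ((isUnit_iff_isUnit_det P).mp hP), Matrix.mul_add,
      nonsing_inv_mul M ((isUnit_iff_isUnit_det M).mp hM)]
    simp only [Matrix.mul_assoc]
  rw [Matrix.mul_assoc Y, Matrix.mul_assoc Y, det_one_add_mul_comm,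
    hconj, det_mul, det_conj' hP, det_nonsing_inv, Ring.inverse_eq_inv', div_eq_inv_mul]

theorem det_transmission_coefficient_general (n : ℕ)
    (A P : Matrix (Fin n) (Fin n) ℂ)
    (B : Matrix (Fin n) (Fin 2) ℂ) (C : Matrix (Fin 2) (Fin n) ℂ)
    (hSyl : A * P + P * A = B * C) (hP : IsUnit P)
    (lam : ℂ)
    (hminus : IsUnit (lam • (1 : Matrix (Fin n) (Fin n) ℂ) - Complex.I • A)) :
    ((1 : Matrix (Fin 2) (Fin 2) ℂ) +
        Complex.I • (C * (lam • (1 : Matrix (Fin n) (Fin n) ℂ) - Complex.I • A)⁻¹ * P⁻¹ * B)).det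
      = (lam • (1 : Matrix (Fin n) (Fin n) ℂ) + Complex.I • A).det /
        (lam • (1 : Matrix (Fin n) (Fin n) ℂ) - Complex.I • A).det := by
  have hintertwine := add_smul_mul_eq_mul_sub_smul_add lam Complex.I A P
  rw [hSyl, ← Matrix.smul_mul] at hintertwine
  rw [← Matrix.mul_smul]
  exact det_one_add_mul_inv_mul_inv_mul_eq_div hP hminus hintertwine

/-- with AP + PA = BC, P invertible, and λI ± iA invertible,
det(I₂ + iC(λI−iA)⁻¹P⁻¹B) = det(λI+iA)/det(λI−iA). -/
theorem det_transmission_coefficient (n : ℕ)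
    (A P : Matrix (Fin n) (Fin n) ℂ)
    (B : Matrix (Fin n) (Fin 2) ℂ) (C : Matrix (Fin 2) (Fin n) ℂ)
    (hSyl : A * P + P * A = B * C) (hP : IsUnit P)
    (lam : ℂ)
    (hplus : IsUnit (lam • (1 : Matrix (Fin n) (Fin n) ℂ) + Complex.I • A))
    (hminus : IsUnit (lam • (1 : Matrix (Fin n) (Fin n) ℂ) - Complex.I • A)) :
    ((1 : Matrix (Fin 2) (Fin 2) ℂ) +
        Complex.I • (C * (lam • (1 : Matrix (Fin n) (Fin n) ℂ) - Complex.I • A)⁻¹ * P⁻¹ * B)).det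
      = (lam • (1 : Matrix (Fin n) (Fin n) ℂ) + Complex.I • A).det /
        (lam • (1 : Matrix (Fin n) (Fin n) ℂ) - Complex.I • A).det :=
  det_transmission_coefficient_general n A P B C hSyl hP lam hminus
end
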